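/- arXiv:1910.09262 — 2 statements merged into one kernel-verified Lean document; each statement's English description precedes it below -/
import Mathlib

section
/- For any prime p ≥ 5 with p ≡ 2 (mod 3), the sum ∑_{k=0}^{(p-5)/3} 1/(3k+2) ≡ q_3/2 (mod p), where q_3 = (3^{p-1}-1)/p. -/
/-!
Write `a j = p ⌊a j / p⌋ + r_j` for `0 < j < p`. The residues `r_j` permute `1, …, p - 1`, so
expanding `a^(p-1) (p-1)! = ∏ a j = ∏ (r_j + p ⌊a j / p⌋)` to first order in `p` gives Lerch's
formula `q_a ≡ ∑_{0<j<p} ⌊a j / p⌋ / (a j) (mod p)`.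

For `a = 3` and `p = 3m + 2` the floor is `0, 1, 2` on the three thirds of `(0, p)`. Since
`1 / (p - j) ≡ -1 / j`, the reflection `j ↦ p - j` maps the middle third to minus itself and
the last third to minus `H_m`, so `q_3 ≡ -(2/3) H_m`; the same reflection turns
`∑_{k<m} 1 / (3k + 2)` into `-(1/3) H_m`.
-/

/-- The `n`-th harmonic number as a rational. -/
def H (n : ℕ) : ℚ := ∑ i ∈ Finset.range n, (1 : ℚ) / (i + 1)

/-- Congruence of rationals modulo `m`: the difference is `m` times a rational
whose denominator is not divisible by `m`'s prime. -/
def ratCongr (m : ℕ) (x y : ℚ) : Prop :=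
  ∃ r : ℚ, ¬ ((m : ℤ) ∣ (r.den : ℤ)) ∧ x - y = (m : ℚ) * r


open Finset

theorem Finset.exists_prod_add_mul_eq {ι R : Type*} [DecidableEq ι] [CommRing R] (t : R)
    (s : Finset ι) (a b : ι → R) :
    ∃ c : R, ∏ i ∈ s, (a i + t * b i)
      = ∏ i ∈ s, a i + t * ∑ i ∈ s, b i * ∏ j ∈ s.erase i, a j + t ^ 2 * c := by
  induction s using Finset.induction_on with
  | empty => exact ⟨0, by simp⟩
  | @insert k s hk ih =>
    obtain ⟨c, hc⟩ := ih
    refine ⟨b k * ∑ i ∈ s, b i * ∏ j ∈ s.erase i, a j + (a k + t * b k) * c, ?_⟩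
    have hsum : ∑ i ∈ insert k s, b i * ∏ j ∈ (insert k s).erase i, a j
        = b k * ∏ j ∈ s, a j + a k * ∑ i ∈ s, b i * ∏ j ∈ s.erase i, a j := by
      rw [sum_insert hk, erase_insert hk, mul_sum]
      refine congrArg _ (sum_congr rfl fun i hi => ?_)
      rw [erase_insert_of_ne (ne_of_mem_of_not_mem hi hk).symm,
        prod_insert (fun h => hk (mem_of_mem_erase h))]
      ring
    rw [prod_insert hk, hc, prod_insert hk, hsum]
    ring

theorem Nat.cast_ne_zero_of_dvd {α : Type*} [Semiring α] {d n : ℕ} (h : d ∣ n)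
    (hn : (n : α) ≠ 0) : (d : α) ≠ 0 := by
  obtain ⟨k, rfl⟩ := h
  intro hd
  rw [Nat.cast_mul, hd, zero_mul] at hn
  exact hn rfl

theorem ZMod.natCast_ne_zero_of_pos_of_lt {n j : ℕ} (h0 : 0 < j) (hj : j < n) :
    (j : ZMod n) ≠ 0 := by
  rw [Ne, ZMod.natCast_eq_zero_iff]
  exact Nat.not_dvd_of_pos_of_lt h0 hj

section RatCast

variable {α ι : Type*} [DivisionRing α]

theorem Rat.natCast_den_mul_ne_zero {x y : ℚ} (hx : (x.den : α) ≠ 0) (hy : (y.den : α) ≠ 0) :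
    ((x * y).den : α) ≠ 0 :=
  Nat.cast_ne_zero_of_dvd (Rat.mul_den_dvd x y) (by rw [Nat.cast_mul]; exact mul_ne_zero hx hy)

theorem Rat.natCast_den_sum_ne_zero (s : Finset ι) (f : ι → ℚ)
    (hf : ∀ i ∈ s, ((f i).den : α) ≠ 0) : ((∑ i ∈ s, f i).den : α) ≠ 0 := by
  classical
  induction s using Finset.induction_on with
  | empty => simp
  | @insert k s hk ih =>
    rw [sum_insert hk]
    refine Nat.cast_ne_zero_of_dvd (Rat.add_den_dvd _ _) ?_
    rw [Nat.cast_mul]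
    exact mul_ne_zero (hf k (mem_insert_self k s)) (ih fun i hi => hf i (mem_insert_of_mem hi))

theorem Rat.cast_sum_of_den_ne_zero (s : Finset ι) (f : ι → ℚ)
    (hf : ∀ i ∈ s, ((f i).den : α) ≠ 0) : ((∑ i ∈ s, f i : ℚ) : α) = ∑ i ∈ s, (f i : α) := by
  classical
  induction s using Finset.induction_on with
  | empty => simp
  | @insert k s hk ih =>
    have hs : ∀ i ∈ s, ((f i).den : α) ≠ 0 := fun i hi => hf i (mem_insert_of_mem hi)
    rw [sum_insert hk, sum_insert hk, Rat.cast_add_of_ne_zero (hf k (mem_insert_self k s))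
      (Rat.natCast_den_sum_ne_zero s f hs), ih hs]

theorem Rat.natCast_den_inv_natCast_ne_zero {n : ℕ} (hn : (n : α) ≠ 0) :
    (((n : ℚ)⁻¹).den : α) ≠ 0 := by
  rw [Rat.inv_natCast_den]
  split_ifs <;> simp [hn]

end RatCast

variable {p : ℕ}

theorem ratCongr_of_cast_eq [Fact p.Prime] {x y : ℚ} (hx : (x.den : ZMod p) ≠ 0)
    (hy : (y.den : ZMod p) ≠ 0) (h : (x : ZMod p) = y) : ratCongr p x y := by
  set d := x - y
  have hd : (d.den : ZMod p) ≠ 0 :=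
    Nat.cast_ne_zero_of_dvd (Rat.sub_den_dvd x y) (by rw [Nat.cast_mul]; exact mul_ne_zero hx hy)
  have hnum : ((d.num : ℤ) : ZMod p) = 0 := by
    have hd0 : (d : ZMod p) = 0 := by rw [Rat.cast_sub_of_ne_zero hx hy, h, sub_self]
    rwa [Rat.cast_def, div_eq_zero_iff, or_iff_left hd] at hd0
  obtain ⟨k, hk⟩ := (ZMod.intCast_zmod_eq_zero_iff_dvd _ _).1 hnum
  refine ⟨(k : ℚ) / (d.den : ℤ), fun hdvd => hd ?_, ?_⟩
  · rw [← Rat.divInt_eq_div] at hdvd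
    exact_mod_cast (ZMod.intCast_zmod_eq_zero_iff_dvd _ _).2 (hdvd.trans (Rat.den_dvd k d.den))
  · calc d = d.num / d.den := (Rat.num_div_den d).symm
      _ = p * ((k : ℚ) / (d.den : ℤ)) := by rw [hk]; push_cast; ring

theorem ratCongr_sum_inv_of_cast_eq [Fact p.Prime] {ι : Type*} (s : Finset ι) (d : ι → ℕ)
    (hd : ∀ i ∈ s, (d i : ZMod p) ≠ 0) (q : ℤ) {n : ℕ} (hn : (n : ZMod p) ≠ 0)
    (h : (q : ZMod p) = n * ∑ i ∈ s, (d i : ZMod p)⁻¹) :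
    ratCongr p (∑ i ∈ s, ((d i : ℚ))⁻¹) (q / n) := by
  have hden : ∀ i ∈ s, ((((d i : ℕ) : ℚ)⁻¹).den : ZMod p) ≠ 0 := fun i hi =>
    Rat.natCast_den_inv_natCast_ne_zero (hd i hi)
  have hqden : ((q : ℚ).den : ZMod p) ≠ 0 := by simp
  have hnden := Rat.natCast_den_inv_natCast_ne_zero hn
  rw [div_eq_mul_inv]
  refine ratCongr_of_cast_eq (Rat.natCast_den_sum_ne_zero _ _ hden)
    (Rat.natCast_den_mul_ne_zero hqden hnden) ?_
  rw [Rat.cast_sum_of_den_ne_zero _ _ hden, Rat.cast_mul_of_ne_zero hqden hnden,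
    Rat.cast_intCast, Rat.cast_inv_nat, h, mul_comm, ← mul_assoc, inv_mul_cancel₀ hn, one_mul]
  exact sum_congr rfl fun i _ => Rat.cast_inv_nat _

theorem sum_Ico_inv_reflect {K : Type*} [DivisionRing K] [CharP K p] (k : ℕ) {n : ℕ}
    (hn : n ≤ p + 1) :
    ∑ j ∈ Ico (p + 1 - n) (p + 1 - k), (j : K)⁻¹ = -∑ j ∈ Ico k n, (j : K)⁻¹ := by
  rw [← sum_Ico_reflect _ k hn, ← sum_neg_distrib]
  refine sum_congr rfl fun j hj => ?_
  rw [Nat.cast_sub (by have := (mem_Ico.1 hj).2; omega), CharP.cast_eq_zero, zero_sub, inv_neg]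

section Lerch

variable [Fact p.Prime]

theorem prod_Ico_mul_mod_eq (a : ℕ) (ha : (a : ZMod p) ≠ 0) :
    ∏ j ∈ Ico 1 p, a * j % p = ∏ j ∈ Ico 1 p, j := by
  have hval : ∀ z : ZMod p, z ≠ 0 → z.val ∈ Ico 1 p := fun z hz =>
    mem_Ico.2 ⟨Nat.one_le_iff_ne_zero.2 ((ZMod.val_ne_zero z).2 hz), z.val_lt⟩
  have hcast : ∀ j ∈ Ico 1 p, (j : ZMod p) ≠ 0 ∧ (j : ZMod p).val = j := fun j hj =>
    ⟨ZMod.natCast_ne_zero_of_pos_of_lt (mem_Ico.1 hj).1 (mem_Ico.1 hj).2,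
      ZMod.val_cast_of_lt (mem_Ico.1 hj).2⟩
  refine prod_nbij' (fun j => a * j % p) (fun j => ((a : ZMod p)⁻¹ * j).val) ?_ ?_ ?_ ?_
    fun _ _ => rfl
  · intro j hj
    simpa [← ZMod.val_natCast] using hval _ (mul_ne_zero ha (hcast j hj).1)
  · intro j hj
    simpa using hval _ (mul_ne_zero (inv_ne_zero ha) (hcast j hj).1)
  · intro j hj
    simp [← ZMod.val_natCast, ← mul_assoc, inv_mul_cancel₀ ha, (hcast j hj).2]
  · intro j hj
    simp [← ZMod.val_natCast, ← mul_assoc, mul_inv_cancel₀ ha, (hcast j hj).2]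

theorem fermatQuotient_eq_sum_div (a : ℕ) (ha : (a : ZMod p) ≠ 0) (q : ℤ)
    (hq : p * q = a ^ (p - 1) - 1) :
    (q : ZMod p) = ∑ j ∈ Ico 1 p, ((a * j / p : ℕ) : ZMod p) / (a * j) := by
  have hp : (p : ℤ) ≠ 0 := by exact_mod_cast (Fact.out : p.Prime).ne_zero
  have hcard : #(Ico 1 p) = p - 1 := Nat.card_Ico 1 p
  have hunit : ∀ j ∈ Ico 1 p, (j : ZMod p) ≠ 0 := fun j hj =>
    ZMod.natCast_ne_zero_of_pos_of_lt (mem_Ico.1 hj).1 (mem_Ico.1 hj).2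
  set W := ∏ j ∈ Ico 1 p, (j : ℤ)
  obtain ⟨c, hc⟩ := exists_prod_add_mul_eq (p : ℤ) (Ico 1 p)
    (fun j => ((a * j % p : ℕ) : ℤ)) (fun j => ((a * j / p : ℕ) : ℤ))
  have hdiv : ∀ j, ((a * j % p : ℕ) : ℤ) + p * ((a * j / p : ℕ) : ℤ) = a * j := fun j => by
    exact_mod_cast Nat.mod_add_div (a * j) p
  have hperm : ∏ j ∈ Ico 1 p, ((a * j % p : ℕ) : ℤ) = W := by
    rw [← Nat.cast_prod, prod_Ico_mul_mod_eq a ha, Nat.cast_prod]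
  rw [prod_congr rfl fun j _ => hdiv j, prod_mul_distrib, prod_const, hcard, hperm] at hc
  have hqW : q * W = ∑ j ∈ Ico 1 p, ((a * j / p : ℕ) : ℤ) *
      ∏ i ∈ (Ico 1 p).erase j, ((a * i % p : ℕ) : ℤ) + p * c :=
    mul_left_cancel₀ hp (by linear_combination hc + W * hq)
  have hqW' := congrArg (Int.cast : ℤ → ZMod p) hqW
  simp only [W, Int.cast_mul, Int.cast_add, Int.cast_sum, Int.cast_prod, Int.cast_natCast,
    ZMod.natCast_self, ZMod.natCast_mod, Nat.cast_mul, zero_mul, add_zero] at hqW'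
  have hfermat : ∏ j ∈ Ico 1 p, ((a : ZMod p) * j) = ∏ j ∈ Ico 1 p, (j : ZMod p) := by
    rw [prod_mul_distrib, prod_const, hcard, ZMod.pow_card_sub_one_eq_one ha, one_mul]
  have herase : ∀ j ∈ Ico 1 p, ∏ i ∈ (Ico 1 p).erase j, ((a : ZMod p) * i)
      = (∏ i ∈ Ico 1 p, (i : ZMod p)) / (a * j) := fun j hj => by
    rw [eq_div_iff (mul_ne_zero ha (hunit j hj)), prod_erase_mul _ _ hj, hfermat]
  rw [sum_congr rfl fun j hj => by rw [herase j hj]] at hqW'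
  refine mul_right_cancel₀ (prod_ne_zero_iff.2 hunit) (hqW'.trans ?_)
  rw [sum_mul]
  exact sum_congr rfl fun j _ => by ring

end Lerch

theorem sum_range_inv_three_mul_add_two {K : Type*} [Field K] [CharP K p] {m : ℕ}
    (hpm : p = 3 * m + 2) :
    ∑ k ∈ range m, ((3 * k + 2 : ℕ) : K)⁻¹ = -(3⁻¹ * ∑ j ∈ Ico 1 (m + 1), (j : K)⁻¹) := by
  rw [mul_sum, ← sum_neg_distrib]
  refine sum_nbij' (fun k => m - k) (fun j => m - j) ?_ ?_ ?_ ?_ ?_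
  · intro k hk; simp only [mem_range, mem_Ico] at hk ⊢; omega
  · intro j hj; simp only [mem_range, mem_Ico] at hj ⊢; omega
  · intro k hk; simp only [mem_range] at hk; omega
  · intro j hj; simp only [mem_Ico] at hj; omega
  · intro k hk
    have hk := mem_range.1 hk
    rw [show 3 * k + 2 = p - 3 * (m - k) by omega, Nat.cast_sub (by omega), CharP.cast_eq_zero,
      zero_sub, inv_neg, Nat.cast_mul, mul_inv, Nat.cast_ofNat]

theorem fermatQuotient_three_eq [Fact p.Prime] {m : ℕ} (hm : 0 < m) (hpm : p = 3 * m + 2)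
    (q : ℤ) (hq : p * q = 3 ^ (p - 1) - 1) :
    (q : ZMod p) = 2 * ∑ k ∈ range m, ((3 * k + 2 : ℕ) : ZMod p)⁻¹ := by
  have h3 : ((3 : ℕ) : ZMod p) ≠ 0 := ZMod.natCast_ne_zero_of_pos_of_lt (by norm_num) (by omega)
  have h2 : ((2 : ℕ) : ZMod p) ≠ 0 := ZMod.natCast_ne_zero_of_pos_of_lt (by norm_num) (by omega)
  have hthird : ∀ c lo hi : ℕ, (∀ j ∈ Ico lo hi, c * p ≤ 3 * j ∧ 3 * j < (c + 1) * p) →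
      ∑ j ∈ Ico lo hi, ((3 * j / p : ℕ) : ZMod p) / (((3 : ℕ) : ZMod p) * j)
        = c * 3⁻¹ * ∑ j ∈ Ico lo hi, (j : ZMod p)⁻¹ := fun c lo hi hc => by
    rw [mul_sum]
    refine sum_congr rfl fun j hj => ?_
    rw [Nat.div_eq_of_lt_le (hc j hj).1 (hc j hj).2, div_eq_mul_inv, mul_inv, Nat.cast_ofNat,
      mul_assoc]
  have hmiddle : ∑ j ∈ Ico (m + 1) (2 * m + 2), (j : ZMod p)⁻¹ = 0 := by
    have hrefl := sum_Ico_inv_reflect (K := ZMod p) (m + 1) (show 2 * m + 2 ≤ p + 1 by omega)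
    rw [show p + 1 - (2 * m + 2) = m + 1 by omega, show p + 1 - (m + 1) = 2 * m + 2 by omega,
      eq_neg_iff_add_eq_zero, ← two_mul] at hrefl
    exact (mul_eq_zero.1 hrefl).resolve_left (by exact_mod_cast h2)
  have hlast := sum_Ico_inv_reflect (K := ZMod p) 1 (show m + 1 ≤ p + 1 by omega)
  rw [show p + 1 - (m + 1) = 2 * m + 2 by omega, show p + 1 - 1 = p by omega] at hlast
  rw [fermatQuotient_eq_sum_div 3 h3 q (by exact_mod_cast hq),
    ← sum_Ico_consecutive _ (show 1 ≤ 2 * m + 2 by omega) (show 2 * m + 2 ≤ p by omega),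
    ← sum_Ico_consecutive _ (show 1 ≤ m + 1 by omega) (show m + 1 ≤ 2 * m + 2 by omega),
    hthird 0 _ _ (fun j hj => by simp only [mem_Ico] at hj; omega),
    hthird 1 _ _ (fun j hj => by simp only [mem_Ico] at hj; omega),
    hthird 2 _ _ (fun j hj => by simp only [mem_Ico] at hj; omega), hmiddle, hlast,
    sum_range_inv_three_mul_add_two hpm]
  push_cast
  ring

theorem stmt5 (p : ℕ) (hp : p.Prime) (hp5 : 5 ≤ p) (h2 : p % 3 = 2) :
    ratCongr p (∑ k ∈ Finset.range ((p - 5) / 3 + 1), (1 : ℚ) / (3 * k + 2))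
      (((3 ^ (p - 1) - 1 : ℚ) / p) / 2) := by
  have := Fact.mk hp
  obtain ⟨m, hpm⟩ : ∃ m, p = 3 * m + 2 := ⟨p / 3, by omega⟩
  obtain ⟨q, hq⟩ : (p : ℤ) ∣ 3 ^ (p - 1) - 1 := Int.prime_dvd_pow_sub_one hp
    (Nat.isCoprime_iff_coprime.2 ((Nat.coprime_primes Nat.prime_three hp).2 (by omega)))
  have hsum : ∑ k ∈ range ((p - 5) / 3 + 1), (1 : ℚ) / (3 * k + 2)
      = ∑ k ∈ range m, ((3 * k + 2 : ℕ) : ℚ)⁻¹ := by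
    rw [show (p - 5) / 3 + 1 = m by omega]
    push_cast
    simp only [one_div]
  have hquot : ((3 ^ (p - 1) - 1 : ℚ) / p) / 2 = (q : ℚ) / (2 : ℕ) := by
    rw [show (3 ^ (p - 1) - 1 : ℚ) = ((3 ^ (p - 1) - 1 : ℤ) : ℚ) by push_cast; rfl, hq]
    field_simp
    push_cast
    ring
  rw [hsum, hquot]
  refine ratCongr_sum_inv_of_cast_eq _ _ (fun k hk => ?_) q
    (ZMod.natCast_ne_zero_of_pos_of_lt (by omega) (by omega))
    (by exact_mod_cast fermatQuotient_three_eq (by omega) hpm q (by rw [← hq]))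
  exact ZMod.natCast_ne_zero_of_pos_of_lt (by omega) (by have := mem_range.1 hk; omega)
end

section
/- For any prime p ≥ 5 with p ≡ 5 (mod 6), the sum ∑_{k=0}^{(p-5)/6} 1/(3k+2) ≡ -(2/3) q_2 (mod p), where q_2 = (2^{p-1}-1)/p. -/
/-!
For `p = 6n + 5` the substitution `3k + 2 = p - 3j` turns the sum into `-(1/3) S₁`, where
`Sᵢ = ∑ 1/j` over `i p/6 < j < (i+1) p/6`. Lerch's formula `a q_a ≡ ∑_{0<j<p} ⌊aj/p⌋/j`
for `a = 2, 3, 6` writes `2q₂`, `3q₃`, `6q₆` as integer combinations of the `Sᵢ`; together with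
the reflection `Sᵢ = -S₅₋ᵢ` (from `j ↦ p - j`) and `q₆ ≡ q₂ + q₃`, eliminating gives `S₁ ≡ 2q₂`.
-/

open Finset

theorem Finset.prod_sub_mul_of_mul_self_eq_zero {ι R : Type*} [CommRing R] [DecidableEq ι]
    (s : Finset ι) (f g : ι → R) {c : R} (hc : c * c = 0) :
    ∏ j ∈ s, (f j - c * g j) = ∏ j ∈ s, f j - c * ∑ j ∈ s, g j * ∏ i ∈ s.erase j, f i := by
  induction s using Finset.induction_on with
  | empty => simp
  | insert a s ha ih =>
    have herase : ∀ j ∈ s, g j * ∏ i ∈ (insert a s).erase j, f i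
        = f a * (g j * ∏ i ∈ s.erase j, f i) := by
      intro j hj
      have hja : a ≠ j := by rintro rfl; exact ha hj
      rw [erase_insert_of_ne hja, prod_insert (fun h => ha (mem_of_mem_erase h))]
      ring
    rw [prod_insert ha, prod_insert ha, sum_insert ha, ih, erase_insert ha,
      sum_congr rfl herase, ← mul_sum]
    linear_combination (g a * ∑ j ∈ s, g j * ∏ i ∈ s.erase j, f i) * hc

theorem natCast_eq_of_natCast_mul_eq {p x y : ℕ} (hp : p ≠ 0)
    (h : ((p * x : ℕ) : ZMod (p ^ 2)) = ((p * y : ℕ) : ZMod (p ^ 2))) : (x : ZMod p) = y := by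
  rw [ZMod.natCast_eq_natCast_iff, sq] at h
  rw [ZMod.natCast_eq_natCast_iff]
  exact Nat.ModEq.mul_left_cancel' hp h

theorem Nat.mul_sub_div_of_not_dvd {p m j : ℕ} (hj : j ≤ p) (hpj : ¬ p ∣ m * j) :
    m * (p - j) / p = m - 1 - m * j / p := by
  have hr : 0 < m * j % p := Nat.pos_of_ne_zero fun h => hpj (Nat.dvd_of_mod_eq_zero h)
  have hrp : m * j % p < p := Nat.mod_lt _ (Nat.pos_of_ne_zero (by rintro rfl; simp_all))
  have hdiv := Nat.div_add_mod (m * j) p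
  set t := m * j / p
  have ht : t < m := by
    refine Nat.lt_of_mul_lt_mul_left (a := p) ?_
    calc p * t < m * j := by omega
      _ ≤ p * m := by rw [mul_comm p]; exact Nat.mul_le_mul_left m hj
  obtain ⟨s, hs⟩ : ∃ s, m = t + 1 + s := ⟨m - 1 - t, by omega⟩
  have hmp : m * p = p * t + p + s * p := by rw [hs]; ring
  rw [Nat.mul_sub, show m - 1 - t = s by omega]
  refine Nat.div_eq_of_lt_le (by omega) ?_
  rw [add_one_mul]
  omega

def fermatQuotient (p a : ℕ) : ℕ := (a ^ (p - 1) - 1) / p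

/-- The part of `∑_{0<j<p} 1/j` with `i p / m ≤ j < (i + 1) p / m`. -/
def harmonicPart (p m i : ℕ) : ZMod p := ∑ j ∈ Ico 1 p with m * j / p = i, (j : ZMod p)⁻¹

section

variable {p : ℕ} [hp : Fact p.Prime]

theorem mul_fermatQuotient_add_one {a : ℕ} (ha : ¬ p ∣ a) :
    p * fermatQuotient p a + 1 = a ^ (p - 1) := by
  have hcop : a.Coprime p := Nat.coprime_comm.mp (hp.out.coprime_iff_not_dvd.mpr ha)
  have hpos : 1 ≤ a ^ (p - 1) :=
    Nat.one_le_pow _ _ (Nat.pos_of_ne_zero (by rintro rfl; exact ha (dvd_zero p)))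
  have hdvd : p ∣ a ^ (p - 1) - 1 :=
    (Nat.modEq_iff_dvd' hpos).mp (Nat.ModEq.pow_card_sub_one_eq_one hp.out hcop).symm
  rw [fermatQuotient, Nat.mul_div_cancel' hdvd]
  omega

theorem cast_fermatQuotient {a : ℕ} (ha : ¬ p ∣ a) :
    (fermatQuotient p a : ℚ) = ((a : ℚ) ^ (p - 1) - 1) / p := by
  have h := congrArg (Nat.cast : ℕ → ℚ) (mul_fermatQuotient_add_one ha)
  push_cast at h
  rw [← h, add_sub_cancel_right, mul_div_cancel_left₀ _ (by exact_mod_cast hp.out.ne_zero)]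

theorem fermatQuotient_mul {a b : ℕ} (ha : ¬ p ∣ a) (hb : ¬ p ∣ b) :
    fermatQuotient p (a * b) =
      fermatQuotient p a + fermatQuotient p b + p * fermatQuotient p a * fermatQuotient p b := by
  have hab : ¬ p ∣ a * b := fun h => (hp.out.dvd_mul.mp h).elim ha hb
  have key := mul_fermatQuotient_add_one hab
  rw [mul_pow, ← mul_fermatQuotient_add_one ha, ← mul_fermatQuotient_add_one hb] at key
  apply Nat.eq_of_mul_eq_mul_left hp.out.pos
  linear_combination key

theorem prod_Ico_mul_mod {M : Type*} [CommMonoid M] {a : ℕ} (ha : ¬ p ∣ a) (f : ℕ → M) :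
    ∏ j ∈ Ico 1 p, f (a * j % p) = ∏ j ∈ Ico 1 p, f j := by
  have hmaps : Set.MapsTo (fun j => a * j % p) (Ico 1 p : Set ℕ) (Ico 1 p) := by
    intro j hj
    simp only [coe_Ico, Set.mem_Ico] at hj ⊢
    refine ⟨Nat.pos_of_ne_zero fun h0 => ?_, Nat.mod_lt _ hp.out.pos⟩
    rcases hp.out.dvd_mul.mp (Nat.dvd_of_mod_eq_zero h0) with h | h
    · exact ha h
    · exact Nat.not_dvd_of_pos_of_lt hj.1 hj.2 h
  have hinj : Set.InjOn (fun j => a * j % p) (Ico 1 p : Set ℕ) := by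
    intro i hi j hj hij
    simp only [coe_Ico, Set.mem_Ico] at hi hj
    have hcop : p.gcd a = 1 := hp.out.coprime_iff_not_dvd.mpr ha
    exact (Nat.ModEq.cancel_left_of_coprime hcop hij).eq_of_lt_of_lt hi.2 hj.2
  exact prod_nbij _ hmaps hinj (surjOn_of_injOn_of_card_le _ hmaps hinj le_rfl) fun _ _ => rfl

theorem fermatQuotient_mul_prod_Ico {a : ℕ} (ha : ¬ p ∣ a) :
    ((fermatQuotient p a * ∏ j ∈ Ico 1 p, j : ℕ) : ZMod p) =
      ((∑ j ∈ Ico 1 p, a * j / p * ∏ i ∈ (Ico 1 p).erase j, a * i : ℕ) : ZMod p) := by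
  -- Modulo `p²`, `∏ a j = ∏ (a j % p + p ⌊a j / p⌋)`, and the residues `a j % p` permute `Ico 1 p`.
  apply natCast_eq_of_natCast_mul_eq hp.out.ne_zero
  have hpp : (p : ZMod (p ^ 2)) * p = 0 := by
    rw [← Nat.cast_mul, ← sq, ZMod.natCast_self]
  have hsplit : ∀ j, ((a * j % p : ℕ) : ZMod (p ^ 2)) = a * j - p * (a * j / p : ℕ) := by
    intro j
    rw [eq_sub_iff_add_eq, ← Nat.cast_mul, ← Nat.cast_mul, ← Nat.cast_add, Nat.mod_add_div]
  have hfermat : (a : ZMod (p ^ 2)) ^ (p - 1) = p * fermatQuotient p a + 1 := by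
    have h := congrArg (Nat.cast : ℕ → ZMod (p ^ 2)) (mul_fermatQuotient_add_one ha)
    push_cast at h
    exact h.symm
  have hperm := prod_Ico_mul_mod ha (fun r => (r : ZMod (p ^ 2)))
  simp only [hsplit] at hperm
  rw [prod_sub_mul_of_mul_self_eq_zero _ _ _ hpp, prod_mul_distrib, prod_const, Nat.card_Ico,
    hfermat] at hperm
  push_cast
  linear_combination hperm

theorem lerch_formula {a : ℕ} (ha : ¬ p ∣ a) :
    (a : ZMod p) * fermatQuotient p a =
      ∑ j ∈ Ico 1 p, ((a * j / p : ℕ) : ZMod p) * (j : ZMod p)⁻¹ := by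
  have ha0 : (a : ZMod p) ≠ 0 := by rwa [Ne, ZMod.natCast_eq_zero_iff]
  have hwilson : ∏ j ∈ Ico 1 p, (j : ZMod p) = -1 := ZMod.prod_Ico_one_prime p
  have hprod : ∏ i ∈ Ico 1 p, (a : ZMod p) * i = -1 := by
    rw [prod_mul_distrib, prod_const, Nat.card_Ico, ZMod.pow_card_sub_one_eq_one ha0, hwilson,
      one_mul]
  have herase : ∀ j ∈ Ico 1 p,
      ∏ i ∈ (Ico 1 p).erase j, (a : ZMod p) * i = -(a : ZMod p)⁻¹ * (j : ZMod p)⁻¹ := by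
    intro j hj
    have hj0 : (j : ZMod p) ≠ 0 := by
      rw [Ne, ZMod.natCast_eq_zero_iff]
      exact Nat.not_dvd_of_pos_of_lt (mem_Ico.mp hj).1 (mem_Ico.mp hj).2
    have h := mul_prod_erase _ (fun i : ℕ => (a : ZMod p) * i) hj
    rw [hprod] at h
    field_simp
    linear_combination h
  have h := fermatQuotient_mul_prod_Ico ha
  push_cast at h
  rw [hwilson, sum_congr rfl fun j hj => by rw [herase j hj]] at h
  simp only [mul_left_comm _ (-(a : ZMod p)⁻¹), ← mul_sum] at h
  rwa [mul_neg_one, neg_mul, neg_inj, eq_inv_mul_iff_mul_eq₀ ha0] at h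

theorem sum_Ico_mul_div_mul_inv {m : ℕ} (hm : 0 < m) (g : ℕ → ZMod p) :
    ∑ j ∈ Ico 1 p, g (m * j / p) * (j : ZMod p)⁻¹ = ∑ i ∈ range m, g i * harmonicPart p m i := by
  have hmaps : ∀ j ∈ Ico 1 p, m * j / p ∈ range m := fun j hj => by
    rw [mem_range, Nat.div_lt_iff_lt_mul hp.out.pos]
    exact (Nat.mul_lt_mul_left hm).mpr (mem_Ico.mp hj).2
  rw [← sum_fiberwise_of_maps_to hmaps]
  refine sum_congr rfl fun i _ => ?_
  rw [harmonicPart, mul_sum]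
  exact sum_congr rfl fun j hj => by rw [(mem_filter.mp hj).2]

theorem mul_fermatQuotient_eq_sum_harmonicPart {a c m : ℕ} (ha : ¬ p ∣ a) (hc : 0 < c)
    (hm : a * c = m) :
    (a : ZMod p) * fermatQuotient p a =
      ∑ i ∈ range m, ((i / c : ℕ) : ZMod p) * harmonicPart p m i := by
  have hm0 : 0 < m := hm ▸ Nat.mul_pos (Nat.pos_of_ne_zero (by rintro rfl; simp at ha)) hc
  rw [lerch_formula ha, ← sum_Ico_mul_div_mul_inv hm0 (fun i => ((i / c : ℕ) : ZMod p))]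
  refine sum_congr rfl fun j _ => ?_
  rw [Nat.div_div_eq_div_mul, ← hm, mul_right_comm, Nat.mul_div_mul_right _ _ hc]

theorem harmonicPart_reflect {m i : ℕ} (hm : ¬ p ∣ m) (hi : i < m) :
    harmonicPart p m (m - 1 - i) = -harmonicPart p m i := by
  have hnd : ∀ j ∈ Ico 1 p, ¬ p ∣ m * j := fun j hj h =>
    (hp.out.dvd_mul.mp h).elim hm (Nat.not_dvd_of_pos_of_lt (mem_Ico.mp hj).1 (mem_Ico.mp hj).2)
  have hmem : ∀ k j, j ∈ Ico 1 p ∧ m * j / p = k →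
      p - j ∈ Ico 1 p ∧ m * (p - j) / p = m - 1 - k := by
    rintro k j ⟨hj, rfl⟩
    rw [Nat.mul_sub_div_of_not_dvd (mem_Ico.mp hj).2.le (hnd j hj), mem_Ico]
    exact ⟨by have := mem_Ico.mp hj; omega, rfl⟩
  rw [harmonicPart, harmonicPart, ← sum_neg_distrib]
  refine sum_nbij' (p - ·) (p - ·) ?_ ?_ ?_ ?_ ?_
  · intro j hj
    have := hmem (m - 1 - i) j (mem_filter.mp hj)
    rw [mem_filter]
    refine ⟨this.1, ?_⟩
    rw [this.2]
    omega
  · exact fun j hj => mem_filter.mpr (hmem i j (mem_filter.mp hj))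
  · intro j hj
    have := mem_Ico.mp (mem_filter.mp hj).1
    omega
  · intro j hj
    have := mem_Ico.mp (mem_filter.mp hj).1
    omega
  · intro j hj
    have hjp := (mem_Ico.mp (mem_filter.mp hj).1).2.le
    rw [Nat.cast_sub hjp, ZMod.natCast_self, zero_sub, inv_neg, neg_neg]

theorem harmonicPart_six_one (h5 : 5 ≤ p) : harmonicPart p 6 1 = 2 * fermatQuotient p 2 := by
  have h2 : ¬ p ∣ 2 := Nat.not_dvd_of_pos_of_lt (by norm_num) (by omega)
  have h3 : ¬ p ∣ 3 := Nat.not_dvd_of_pos_of_lt (by norm_num) (by omega)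
  have h6 : ¬ p ∣ 6 := fun h => (hp.out.dvd_mul.mp (show p ∣ 2 * 3 from h)).elim h2 h3
  have L2 := mul_fermatQuotient_eq_sum_harmonicPart h2 (c := 3) (by norm_num) rfl
  have L3 := mul_fermatQuotient_eq_sum_harmonicPart h3 (c := 2) (by norm_num) rfl
  have L6 := mul_fermatQuotient_eq_sum_harmonicPart h6 (c := 1) (by norm_num) rfl
  have R1 := harmonicPart_reflect (p := p) h6 (i := 1) (by norm_num)
  have hq6 := congrArg (Nat.cast : ℕ → ZMod p) (fermatQuotient_mul h2 h3)
  simp only [sum_range_succ, sum_range_zero] at L2 L3 L6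
  norm_num at L2 L3 L6 R1
  push_cast at hq6
  rw [ZMod.natCast_self] at hq6
  have h2ne : (2 : ZMod p) ≠ 0 := by exact_mod_cast (ZMod.natCast_eq_zero_iff 2 p).not.mpr h2
  refine mul_left_cancel₀ h2ne ?_
  linear_combination L2 + 2 * L3 - L6 + 6 * hq6 + R1

theorem three_mul_sum_inv_three_mul_add_two {n : ℕ} (hn : p = 6 * n + 5) :
    3 * ∑ k ∈ range (n + 1), ((3 * k + 2 : ℕ) : ZMod p)⁻¹ = -harmonicPart p 6 1 := by
  have h3 : (3 : ZMod p) ≠ 0 := by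
    exact_mod_cast (ZMod.natCast_eq_zero_iff 3 p).not.mpr
      (Nat.not_dvd_of_pos_of_lt (by norm_num) (by omega))
  have hpart : (Ico 1 p).filter (fun j => 6 * j / p = 1) = Ico (n + 1) (2 * n + 2) := by
    ext j
    simp only [mem_filter, mem_Ico, Nat.div_eq_iff hp.out.pos]
    omega
  rw [harmonicPart, hpart, sum_Ico_eq_sum_range, show 2 * n + 2 - (n + 1) = n + 1 by omega,
    ← sum_range_reflect, mul_sum, ← sum_neg_distrib]
  refine sum_congr rfl fun k hkn => ?_
  have hk : k ≤ n := Nat.lt_succ_iff.mp (mem_range.mp hkn)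
  have hsum := congrArg (Nat.cast : ℕ → ZMod p)
    (show 3 * (n + 1 - 1 - k) + 2 + 3 * (n + 1 + k) = p by omega)
  rw [Nat.cast_add, Nat.cast_mul, Nat.cast_ofNat, ZMod.natCast_self] at hsum
  rw [eq_neg_of_add_eq_zero_left hsum, inv_neg, mul_inv, mul_neg, ← mul_assoc,
    mul_inv_cancel₀ h3, one_mul]

end

/-- `x` is `p`-integral and reduces to `z` modulo `p`. -/
def HasResidue (p : ℕ) (x : ℚ) (z : ZMod p) : Prop :=
  ∃ A B : ℤ, ¬ (p : ℤ) ∣ B ∧ x = A / B ∧ (A : ZMod p) = B * z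

namespace HasResidue

variable {p : ℕ} [hp : Fact p.Prime]

theorem intCast_div {A B : ℤ} (hB : ¬ (p : ℤ) ∣ B) :
    HasResidue p ((A : ℚ) / B) ((A : ZMod p) / B) := by
  refine ⟨A, B, hB, rfl, ?_⟩
  rw [mul_div_cancel₀]
  rwa [Ne, ZMod.intCast_zmod_eq_zero_iff_dvd]

theorem inv_natCast {n : ℕ} (hn : ¬ p ∣ n) : HasResidue p (n : ℚ)⁻¹ (n : ZMod p)⁻¹ := by
  refine ⟨1, n, by exact_mod_cast hn, by simp, ?_⟩
  push_cast
  rw [mul_inv_cancel₀]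
  rwa [Ne, ZMod.natCast_eq_zero_iff]

theorem add {x y : ℚ} {z w : ZMod p} (hx : HasResidue p x z) (hy : HasResidue p y w) :
    HasResidue p (x + y) (z + w) := by
  obtain ⟨A, B, hB, rfl, hA⟩ := hx
  obtain ⟨C, D, hD, rfl, hC⟩ := hy
  have hB0 : (B : ℚ) ≠ 0 := Int.cast_ne_zero.mpr fun h => hB (h ▸ dvd_zero _)
  have hD0 : (D : ℚ) ≠ 0 := Int.cast_ne_zero.mpr fun h => hD (h ▸ dvd_zero _)
  refine ⟨A * D + C * B, B * D, fun h => ?_, ?_, ?_⟩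
  · exact (Nat.prime_iff_prime_int.mp hp.out).dvd_or_dvd h |>.elim hB hD
  · push_cast
    field_simp
  · push_cast
    rw [hA, hC]
    ring

theorem sum {ι : Type*} (s : Finset ι) {x : ι → ℚ} {z : ι → ZMod p}
    (h : ∀ i ∈ s, HasResidue p (x i) (z i)) : HasResidue p (∑ i ∈ s, x i) (∑ i ∈ s, z i) := by
  classical
  induction s using Finset.induction_on with
  | empty => exact ⟨0, 1, by exact_mod_cast hp.out.not_dvd_one, by simp, by simp⟩
  | insert a s ha ih =>
    rw [sum_insert ha, sum_insert ha]
    exact (h a (mem_insert_self a s)).add (ih fun i hi => h i (mem_insert_of_mem hi))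

end HasResidue

theorem ratCongr_of_hasResidue {p : ℕ} [hp : Fact p.Prime] {x y : ℚ} {z w : ZMod p}
    (hx : HasResidue p x z) (hy : HasResidue p y w) (hzw : z = w) : ratCongr p x y := by
  obtain ⟨A, B, hB, rfl, hA⟩ := hx
  obtain ⟨C, D, hD, rfl, hC⟩ := hy
  have hB0 : (B : ℚ) ≠ 0 := Int.cast_ne_zero.mpr fun h => hB (h ▸ dvd_zero _)
  have hD0 : (D : ℚ) ≠ 0 := Int.cast_ne_zero.mpr fun h => hD (h ▸ dvd_zero _)
  obtain ⟨N, hN⟩ : (p : ℤ) ∣ A * D - C * B := by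
    rw [← ZMod.intCast_zmod_eq_zero_iff_dvd]
    push_cast
    rw [hA, hC, hzw]
    ring
  refine ⟨(N : ℚ) / ((B * D : ℤ) : ℚ), fun h => ?_, ?_⟩
  · have hden := h.trans (by simpa [Rat.divInt_eq_div] using Rat.den_dvd N (B * D))
    exact (Nat.prime_iff_prime_int.mp hp.out).dvd_or_dvd hden |>.elim hB hD
  · have hNq : (A : ℚ) * D - C * B = p * N := by exact_mod_cast hN
    push_cast
    field_simp
    linear_combination hNq

theorem stmt11_general (p : ℕ) (hp : p.Prime) (h5 : p % 6 = 5) :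
    ratCongr p (∑ k ∈ Finset.range ((p - 5) / 6 + 1), (1 : ℚ) / (3 * k + 2))
      (-(2 / 3) * ((2 ^ (p - 1) - 1 : ℚ) / p)) := by
  have := Fact.mk hp
  obtain ⟨n, hn⟩ : ∃ n, p = 6 * n + 5 := ⟨p / 6, by omega⟩
  have h2 : ¬ p ∣ 2 := Nat.not_dvd_of_pos_of_lt (by norm_num) (by omega)
  have h3 : ¬ (p : ℤ) ∣ 3 := by exact_mod_cast Nat.not_dvd_of_pos_of_lt (by norm_num) (by omega)
  have hlhs : ∑ k ∈ range (n + 1), (1 : ℚ) / (3 * k + 2) =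
      ∑ k ∈ range (n + 1), ((3 * k + 2 : ℕ) : ℚ)⁻¹ := by
    push_cast
    simp only [one_div]
  have hrhs : -(2 / 3) * ((2 ^ (p - 1) - 1 : ℚ) / p) =
      ((-2 * fermatQuotient p 2 : ℤ) : ℚ) / ((3 : ℤ) : ℚ) := by
    have hq := cast_fermatQuotient h2
    push_cast at hq ⊢
    rw [← hq]
    ring
  rw [show (p - 5) / 6 = n by omega, hlhs, hrhs]
  refine ratCongr_of_hasResidue (HasResidue.sum _ fun k hk => HasResidue.inv_natCast ?_)
    (HasResidue.intCast_div h3) ?_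
  · exact Nat.not_dvd_of_pos_of_lt (by omega) (by have := mem_range.mp hk; omega)
  · have key := three_mul_sum_inv_three_mul_add_two hn
    rw [harmonicPart_six_one (by omega)] at key
    rw [eq_div_iff ((ZMod.intCast_zmod_eq_zero_iff_dvd 3 p).not.mpr h3)]
    push_cast at key ⊢
    linear_combination key

theorem stmt11 (p : ℕ) (hp : p.Prime) (hp5 : 5 ≤ p) (h5 : p % 6 = 5) :
    ratCongr p (∑ k ∈ Finset.range ((p - 5) / 6 + 1), (1 : ℚ) / (3 * k + 2))
      (-(2 / 3) * ((2 ^ (p - 1) - 1 : ℚ) / p)) :=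
  stmt11_general p hp h5
end
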